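/- arXiv:0711.3706 — 2 statements merged into one kernel-verified Lean document; each statement's English description precedes it below -/
import Mathlib

section
/- Every surjective group homomorphism from a finitely generated free group to itself is an automorphism (free groups of finite rank are Hopfian). -/
/-!
Malcev's argument: a finitely generated group `G` has only finitely many homomorphisms to a
finite group `Q`, and precomposition with a surjective endomorphism `f` permutes them. So every
homomorphism `G → Q` factors through `f` and kills `ker f`; if `G` is residually finite, `ker f`
is trivial.

Free groups are residually finite: for a word `w ≠ 1` let `S` be the finite set of elements
spelled by the suffixes of `w`. Left multiplication by a generator is injective wherever it
stays inside `S`, so it extends to a permutation of `S`; the resulting action of the free group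
carries `1` to `w`, letter by letter.
-/

open Function

theorem Set.Finite.exists_perm_mul_left {G : Type*} [Group G] {S : Set G} (hS : S.Finite)
    (g : G) : ∃ π : Equiv.Perm S, ∀ u : S, g * u ∈ S → (π u : G) = g * u := by
  classical
  have : Finite S := hS.to_subtype
  let e : {u : S // g * u ∈ S} ≃ {v : S // g⁻¹ * v ∈ S} :=
    { toFun := fun u => ⟨⟨g * u, u.2⟩, by simp⟩
      invFun := fun v => ⟨⟨g⁻¹ * v, v.2⟩, by simp⟩
      left_inv := fun u => by simp
      right_inv := fun v => by simp }
  exact ⟨e.extendSubtype, fun u hu => by rw [e.extendSubtype_apply_of_mem u hu]; rfl⟩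

theorem Group.FG.finite_monoidHom (G Q : Type*) [Group G] [Group Q] [Group.FG G] [Finite Q] :
    Finite (G →* Q) := by
  obtain ⟨S, hS, φ, hφ⟩ := Group.fg_iff_exists_freeGroup_hom_surjective.mp ‹Group.FG G›
  have : Finite S := hS.to_subtype
  have : Finite (FreeGroup S →* Q) := .of_equiv _ FreeGroup.lift
  exact .of_injective (fun ψ => ψ.comp φ) fun _ _ h => (MonoidHom.cancel_right hφ).mp h

theorem MonoidHom.injective_of_surjective_of_residuallyFinite {G : Type*} [Group G]
    [Group.FG G] [Group.ResiduallyFinite G] (f : G →* G) (hf : Surjective f) : Injective f := by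
  refine (injective_iff_map_eq_one f).mpr fun w hw => by_contra fun hw1 => ?_
  obtain ⟨H, hwH⟩ := Group.exists_finiteIndexNormalSubgroup_notMem w hw1
  have := Group.FG.finite_monoidHom G (G ⧸ H.toSubgroup)
  have hcomp : Injective fun ψ : G →* G ⧸ H.toSubgroup => ψ.comp f :=
    fun _ _ h => (MonoidHom.cancel_right hf).mp h
  obtain ⟨ψ, hψ⟩ := Finite.injective_iff_surjective.mp hcomp (QuotientGroup.mk' H.toSubgroup)
  apply hwH
  rw [← FiniteIndexNormalSubgroup.mem_toSubgroup_iff, ← QuotientGroup.eq_one_iff,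
    ← QuotientGroup.mk'_apply, ← hψ]
  simp [hw]

namespace FreeGroup

variable {α : Type*}

theorem mk_cons_true (x : α) (t : List (α × Bool)) : mk ((x, true) :: t) = of x * mk t := by
  simp [of, mul_mk]

theorem mk_cons_false (x : α) (t : List (α × Bool)) :
    mk ((x, false) :: t) = (of x)⁻¹ * mk t := by
  simp [of, mul_mk, inv_mk, invRev]

theorem lift_mk_apply_one_of_forall_suffix {S : Set (FreeGroup α)} (h1 : 1 ∈ S)
    {π : α → Equiv.Perm S}
    (hπ : ∀ x (u : S), of x * (u : FreeGroup α) ∈ S → (π x u : FreeGroup α) = of x * u)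
    {t : List (α × Bool)} (ht : ∀ s, s <:+ t → mk s ∈ S) :
    (lift π (mk t) ⟨1, h1⟩ : FreeGroup α) = mk t := by
  induction t with
  | nil => simp [one_eq_mk]
  | cons a t ih =>
    have ht' : ∀ s, s <:+ t → mk s ∈ S := fun s hs => ht s (hs.trans (List.suffix_cons a t))
    have hu : lift π (mk t) ⟨1, h1⟩ = ⟨mk t, ht' t List.suffix_rfl⟩ := Subtype.ext (ih ht')
    have hat := ht _ List.suffix_rfl
    obtain ⟨x, _ | _⟩ := a
    · rw [mk_cons_false] at hat ⊢
      have hπx : π x ⟨_, hat⟩ = ⟨mk t, ht' t List.suffix_rfl⟩ :=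
        Subtype.ext <| (hπ x _ (by simpa using ht' t List.suffix_rfl)).trans
          (mul_inv_cancel_left _ _)
      rw [_root_.map_mul, Equiv.Perm.mul_apply, hu, _root_.map_inv, lift_apply_of,
        Equiv.Perm.inv_eq_iff_eq.mpr hπx.symm]
    · rw [mk_cons_true] at hat ⊢
      rw [_root_.map_mul, Equiv.Perm.mul_apply, hu, lift_apply_of, hπ x _ hat]

theorem exists_monoidHom_perm_ne_one {w : FreeGroup α} (hw : w ≠ 1) :
    ∃ (S : Set (FreeGroup α)) (_ : Finite S) (φ : FreeGroup α →* Equiv.Perm S), φ w ≠ 1 := by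
  obtain ⟨l, rfl⟩ : ∃ l, mk l = w := Quot.exists_rep w
  set S : Set (FreeGroup α) := mk '' {t | t <:+ l}
  have hS : S.Finite := by
    refine Set.Finite.image _ ?_
    simpa only [List.mem_tails] using l.tails.finite_toSet
  have hmem : ∀ t, t <:+ l → mk t ∈ S := fun t ht => ⟨t, ht, rfl⟩
  have h1 : 1 ∈ S := hmem [] List.nil_suffix
  choose π hπ using fun x => hS.exists_perm_mul_left (of x)
  refine ⟨S, hS.to_subtype, lift π, fun h => hw ?_⟩
  have := lift_mk_apply_one_of_forall_suffix h1 hπ hmem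
  simpa [h, one_eq_mk] using this.symm

instance residuallyFinite : Group.ResiduallyFinite (FreeGroup α) :=
  Group.residuallyFinite_of_forall_exists_finite_monoidHom fun _ hw =>
    let ⟨S, _, φ, hφ⟩ := exists_monoidHom_perm_ne_one hw
    ⟨Equiv.Perm S, inferInstance, inferInstance, φ, hφ⟩

end FreeGroup

theorem free_group_hopfian (n : ℕ) (f : FreeGroup (Fin n) →* FreeGroup (Fin n))
    (hf : Function.Surjective f) : Function.Bijective f :=
  ⟨f.injective_of_surjective_of_residuallyFinite hf, hf⟩
end

section
/- If there exists a surjective group homomorphism from the free group of rank n onto the free group of rank m, then m ≤ n. -/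
/-!
A surjection `F_n → F_m` makes precomposition an injection `Hom(F_m, G) → Hom(F_n, G)` for every
group `G`. For a finite `G` these sets have `|G| ^ m` and `|G| ^ n` elements, since a homomorphism
out of a free group is an arbitrary choice of images of the generators; taking `|G| = 2` gives
`2 ^ m ≤ 2 ^ n`.
-/

theorem MonoidHom.nat_card_le_of_surjective {M N P : Type*} [MulOneClass M] [MulOneClass N]
    [MulOneClass P] [Finite (M →* P)] {f : M →* N} (hf : Function.Surjective f) :
    Nat.card (N →* P) ≤ Nat.card (M →* P) :=
  Nat.card_le_card_of_injective (fun g => g.comp f) fun _ _ h => (MonoidHom.cancel_right hf).1 h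

namespace FreeGroup

instance {α G : Type*} [Finite α] [Group G] [Finite G] : Finite (FreeGroup α →* G) :=
  .of_equiv _ FreeGroup.lift

theorem nat_card_monoidHom {α G : Type*} [Finite α] [Group G] :
    Nat.card (FreeGroup α →* G) = Nat.card G ^ Nat.card α := by
  rw [← Nat.card_fun, Nat.card_congr FreeGroup.lift.symm]

end FreeGroup

theorem free_group_surjection_rank (n m : ℕ)
    (f : FreeGroup (Fin n) →* FreeGroup (Fin m)) (hf : Function.Surjective f) :
    m ≤ n := by
  have hcard := MonoidHom.nat_card_le_of_surjective (P := Multiplicative (ZMod 2)) hf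
  simp only [FreeGroup.nat_card_monoidHom, Nat.card_eq_fintype_card,
    Fintype.card_multiplicative, ZMod.card, Fintype.card_fin] at hcard
  exact (Nat.pow_le_pow_iff_right one_lt_two).1 hcard
end
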